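/- arXiv:1711.09371 — 2 statements merged into one kernel-verified Lean document; each statement's English description precedes it below -/
import Mathlib

section
/- For every k ≥ 1, the restricted wreath product ℤ_2 wr ℤ^k has property R_∞: every automorphism φ of ℤ_2 wr ℤ^k has infinitely many Reidemeister classes, i.e. R(φ) = ∞. -/
/-- Twisted conjugacy relation for an automorphism `φ` of `G`:
`x ∼ y` iff `y = h * x * φ(h)⁻¹` for some `h`. -/
def twistedConj {G : Type*} [Group G] (φ : G ≃* G) (x y : G) : Prop :=
  ∃ h : G, y = h * x * (φ h)⁻¹

/-- The set of Reidemeister (twisted conjugacy) classes of `φ`.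
Its cardinality is the Reidemeister number `R(φ)`. -/
def ReidemeisterClasses {G : Type*} [Group G] (φ : G ≃* G) := Quot (twistedConj φ)

/-- `Lamp q k` is `Σ = ⨁_{x ∈ ℤ^k} ℤ/qℤ`: finitely supported functions `ℤ^k → ℤ/qℤ`. -/
abbrev Lamp (q k : ℕ) := (Fin k → ℤ) →₀ ZMod q

/-- The shift action of `ℤ^k` on `Σ`: `α(y)(δ_x) = δ_{x+y}`. -/
noncomputable def lampShift (q k : ℕ) :
    Multiplicative (Fin k → ℤ) →* MulAut (Multiplicative (Lamp q k)) where
  toFun y := AddEquiv.toMultiplicative (Finsupp.domCongr (Equiv.addRight (Multiplicative.toAdd y)))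
  map_one' := by
    refine MulEquiv.ext fun f => ?_
    refine Multiplicative.toAdd.injective ?_
    ext x
    simp <;> rfl
  map_mul' y z := by
    refine MulEquiv.ext fun f => ?_
    refine Multiplicative.toAdd.injective ?_
    ext x
    simp [Equiv.Perm.mul_def, add_comm, add_assoc, add_left_comm]

/-- The restricted wreath product `ℤ_q wr ℤ^k = Σ ⋊ ℤ^k`. -/
abbrev Wreath (q k : ℕ) :=
  SemidirectProduct (Multiplicative (Lamp q k)) (Multiplicative (Fin k → ℤ)) (lampShift q k)

/-- `δ_x ∈ Σ`: the function equal to `1` at `x` and `0` elsewhere (written multiplicatively). -/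
noncomputable def lampDelta (q k : ℕ) (x : Fin k → ℤ) : Multiplicative (Lamp q k) :=
  Multiplicative.ofAdd (Finsupp.single x 1)

/-!
Since `ℤ^k` is torsion-free, `Σ` consists exactly of the elements of order at most two, so every
automorphism `φ` preserves `Σ` and induces automorphisms `ψ` of `Σ` and `E` of `ℤ^k` with
`ψ ∘ α(y) = α(E y) ∘ ψ`. In the group ring `𝔽₂[ℤ^k] = Σ` this says that `ψ` is `E` followed by
multiplication with `ψ(δ₀)`, which is therefore a unit; units of `𝔽₂[ℤ^k]` are trivial, so
`ψ(δ_x) = δ_{a + E x}` for some `a`.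

Twisted conjugation by `h` moves the `ℤ^k`-coordinate by `(1 - E) h`. If `det (1 - E) = 0`, a
nonzero `c` with `c (1 - E) = 0` gives the invariant `g ↦ c ⬝ g.right`. Otherwise elements of `Σ`
are twisted conjugate only by elements of `Σ`, and pushing lamps forward along
`x ↦ gcd ((1 - E) x - a)`, which is constant on the orbits of `x ↦ a + E x`, gives an invariant
on `Σ` taking infinitely many values.
-/

open SemidirectProduct Multiplicative

theorem twistedConj_equivalence {G : Type*} [Group G] (φ : G ≃* G) :
    Equivalence (twistedConj φ) where
  refl x := ⟨1, by simp⟩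
  symm := by
    rintro x _ ⟨h, rfl⟩
    exact ⟨h⁻¹, by simp [mul_assoc]⟩
  trans := by
    rintro x _ _ ⟨h, rfl⟩ ⟨h', rfl⟩
    exact ⟨h' * h, by simp [mul_assoc]⟩

theorem infinite_reidemeisterClasses_of_invariantOn {G X : Type*} [Group G] {φ : G ≃* G}
    {S : Set G} (F : G → X)
    (hF : ∀ g ∈ S, ∀ h, h * g * (φ h)⁻¹ ∈ S → F (h * g * (φ h)⁻¹) = F g)
    (hS : (F '' S).Infinite) : Infinite (ReidemeisterClasses φ) := by
  have := hS.to_subtype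
  refine Infinite.of_injective
    (fun t : F '' S => (Quot.mk _ t.2.choose : ReidemeisterClasses φ)) ?_
  rintro ⟨x, ht⟩ ⟨x', ht'⟩ hmk
  obtain ⟨hs, hx⟩ := ht.choose_spec
  obtain ⟨hs', hx'⟩ := ht'.choose_spec
  obtain ⟨h, hh⟩ := (twistedConj_equivalence φ).eqvGen_iff.1 (Quot.eqvGen_exact hmk)
  rw [hh] at hs' hx'
  exact Subtype.ext (hx.symm.trans ((hF _ hs h hs').symm.trans hx'))

namespace SemidirectProduct

section Group

variable {N H : Type*} [Group N] [Group H] {α : H →* MulAut N}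

theorem eq_inl_left_of_right_eq_one {g : N ⋊[α] H} (hg : g.right = 1) : g = inl g.left := by
  conv_lhs => rw [← inl_left_mul_inr_right g, hg, map_one, mul_one]

theorem right_eq_one_iff_mul_self_eq_one [IsMulTorsionFree H] (hN : ∀ n : N, n * n = 1)
    (g : N ⋊[α] H) : g.right = 1 ↔ g * g = 1 := by
  refine ⟨fun hg => ?_, fun hg => ?_⟩
  · rw [eq_inl_left_of_right_eq_one hg, ← map_mul, hN, map_one]
  · have : g.right ^ 2 = 1 ^ 2 := by rw [sq, ← mul_right, hg, one_right, one_pow]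
    exact IsMulTorsionFree.pow_left_injective two_ne_zero this

variable (φ : N ⋊[α] H ≃* N ⋊[α] H)

theorem right_apply_eq_right_apply_inr_right (hφ : ∀ g, (φ g).right = 1 ↔ g.right = 1)
    (g : N ⋊[α] H) : (φ g).right = (φ (inr g.right)).right := by
  conv_lhs => rw [← inl_left_mul_inr_right g, map_mul, mul_right, (hφ _).2 (right_inl _), one_mul]

theorem right_symm_apply_eq_one_iff (hφ : ∀ g, (φ g).right = 1 ↔ g.right = 1)
    (g : N ⋊[α] H) : (φ.symm g).right = 1 ↔ g.right = 1 := by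
  rw [← hφ, MulEquiv.apply_symm_apply]

variable (hφ : ∀ g, (φ g).right = 1 ↔ g.right = 1)

def leftEquiv : N ≃* N where
  toFun n := (φ (inl n)).left
  invFun n := (φ.symm (inl n)).left
  left_inv n := by
    simp only
    rw [← eq_inl_left_of_right_eq_one ((hφ _).2 (right_inl n)), MulEquiv.symm_apply_apply,
      left_inl]
  right_inv n := by
    simp only
    rw [← eq_inl_left_of_right_eq_one ((right_symm_apply_eq_one_iff φ hφ _).2 (right_inl n)),
      MulEquiv.apply_symm_apply, left_inl]
  map_mul' n m := by
    simp only [map_mul, mul_left, (hφ _).2 (right_inl _), map_one, MulAut.one_apply]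

def rightEquiv : H ≃* H where
  toFun h := (φ (inr h)).right
  invFun h := (φ.symm (inr h)).right
  left_inv h := by
    simp only
    rw [← right_apply_eq_right_apply_inr_right φ.symm (right_symm_apply_eq_one_iff φ hφ),
      MulEquiv.symm_apply_apply, right_inr]
  right_inv h := by
    simp only
    rw [← right_apply_eq_right_apply_inr_right φ hφ, MulEquiv.apply_symm_apply, right_inr]
  map_mul' h h' := by simp only [map_mul, mul_right]

theorem apply_inl (n : N) : φ (inl n) = inl (leftEquiv φ hφ n) :=
  eq_inl_left_of_right_eq_one ((hφ _).2 (right_inl n))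

theorem right_apply (g : N ⋊[α] H) : (φ g).right = rightEquiv φ hφ g.right :=
  right_apply_eq_right_apply_inr_right φ hφ g

theorem right_twist (h g : N ⋊[α] H) :
    (h * g * (φ h)⁻¹).right = h.right * g.right * (rightEquiv φ hφ h.right)⁻¹ := by
  rw [mul_right, mul_right, inv_right, right_apply φ hφ]

theorem inl_twist_inl (τ ρ : N) :
    inl τ * inl ρ * (φ (inl τ))⁻¹ = (inl (τ * ρ * (leftEquiv φ hφ τ)⁻¹) : N ⋊[α] H) := by
  rw [apply_inl φ hφ, ← map_inv, ← map_mul, ← map_mul]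

end Group

section CommGroup

variable {N H : Type*} [CommGroup N] [Group H] {α : H →* MulAut N}
  (φ : N ⋊[α] H ≃* N ⋊[α] H) (hφ : ∀ g, (φ g).right = 1 ↔ g.right = 1)

theorem leftEquiv_aut (h : H) (n : N) :
    leftEquiv φ hφ (α h n) = α (rightEquiv φ hφ h) (leftEquiv φ hφ n) := by
  apply inl_injective (φ := α)
  obtain ⟨m, hm⟩ : ∃ m, φ (inr h) = inl m * inr (rightEquiv φ hφ h) :=
    ⟨_, by conv_lhs => rw [← inl_left_mul_inr_right (φ (inr h)), right_apply φ hφ, right_inr]⟩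
  rw [← apply_inl φ hφ, inl_aut, map_mul, map_mul, map_inv inr, map_inv, apply_inl φ hφ, hm]
  calc inl m * inr (rightEquiv φ hφ h) * inl (leftEquiv φ hφ n) *
        (inl m * inr (rightEquiv φ hφ h))⁻¹
      = inl m * (inr (rightEquiv φ hφ h) * inl (leftEquiv φ hφ n) *
          inr (rightEquiv φ hφ h)⁻¹) * inl m⁻¹ := by
        simp only [mul_inv_rev, map_inv, mul_assoc]
    _ = inl (α (rightEquiv φ hφ h) (leftEquiv φ hφ n)) := by
      rw [← inl_aut, ← map_mul, ← map_mul, mul_inv_cancel_comm]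

end CommGroup

end SemidirectProduct

namespace AddMonoidAlgebra

open Finset

theorem exists_eq_single_of_mul_eq_single {R A : Type*} [Semiring R] [NoZeroDivisors R] [Add A]
    [TwoUniqueSums A] {u v : AddMonoidAlgebra R A} {c : A} {r : R} (hr : r ≠ 0)
    (huv : u * v = single c r) : ∃ a s, u = single a s := by
  have hu : u.coeff.support.Nonempty := by
    rw [Finsupp.support_nonempty_iff, Ne, coeff_eq_zero]
    rintro rfl
    simp [eq_comm, hr] at huv
  have hv : v.coeff.support.Nonempty := by
    rw [Finsupp.support_nonempty_iff, Ne, coeff_eq_zero]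
    rintro rfl
    simp [eq_comm, hr] at huv
  have hsum : ∀ a ∈ u.coeff.support, ∀ b ∈ v.coeff.support,
      UniqueAdd u.coeff.support v.coeff.support a b → a + b = c := by
    intro a ha b hb hab
    have hne : (u * v).coeff (a + b) ≠ 0 := by
      rw [coeff_mul_add_of_uniqueAdd hab]
      exact mul_ne_zero (Finsupp.mem_support_iff.1 ha) (Finsupp.mem_support_iff.1 hb)
    rw [huv, coeff_single] at hne
    by_contra h
    exact hne (Finsupp.single_eq_of_ne h)
  -- two distinct unique sums would both have to equal `c`
  have hcard : #u.coeff.support * #v.coeff.support ≤ 1 := by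
    by_contra! h
    obtain ⟨p, hp, p', hp', hne, hpu, hpu'⟩ := TwoUniqueSums.uniqueAdd_of_one_lt_card h
    rw [mem_product] at hp hp'
    have := hpu hp'.1 hp'.2 ((hsum _ hp'.1 _ hp'.2 hpu').trans (hsum _ hp.1 _ hp.2 hpu).symm)
    exact hne (Prod.ext this.1 this.2).symm
  obtain ⟨a, -, ha⟩ := Finsupp.card_support_eq_one.1 (le_antisymm
    (le_of_mul_le_of_one_le_left hcard (card_pos.2 hv)) (card_pos.2 hu))
  exact ⟨a, u.coeff a, congrArg ofCoeff ha⟩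

end AddMonoidAlgebra

section IntContent

open Finset Matrix

variable {ι : Type*} [Fintype ι]

def intContent (v : ι → ℤ) : ℤ := univ.gcd v

theorem normalize_intContent (v : ι → ℤ) : normalize (intContent v) = intContent v :=
  normalize_gcd

theorem intContent_eq_zero_iff {v : ι → ℤ} : intContent v = 0 ↔ v = 0 := by
  simp [intContent, Finset.gcd_eq_zero_iff, funext_iff]

theorem one_le_intContent {v : ι → ℤ} (hv : v ≠ 0) : 1 ≤ intContent v := by
  have h0 : intContent v ≠ 0 := intContent_eq_zero_iff.not.2 hv
  have := Int.nonneg_of_normalize_eq_self (normalize_intContent v)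
  omega

theorem intContent_smul (c : ℤ) (v : ι → ℤ) : intContent (c • v) = |c| * intContent v := by
  rw [Int.abs_eq_normalize, intContent, intContent, ← Finset.gcd_mul_left]
  rfl

theorem intContent_dvd_intContent_map {κ : Type*} [Fintype κ] (f : (ι → ℤ) →+ (κ → ℤ))
    (v : ι → ℤ) : intContent v ∣ intContent (f v) := by
  obtain ⟨w, hw⟩ : ∃ w, v = intContent v • w :=
    ⟨fun i => v i / intContent v, funext fun i =>
      (Int.mul_ediv_cancel' (gcd_dvd (mem_univ i))).symm⟩
  have hfv : f v = intContent v • f w := by rw [← map_zsmul, ← hw]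
  exact dvd_gcd fun i _ => by rw [hfv]; exact Dvd.intro _ rfl

theorem intContent_addEquiv (e : (ι → ℤ) ≃+ (ι → ℤ)) (v : ι → ℤ) :
    intContent (e v) = intContent v := by
  refine dvd_antisymm_of_normalize_eq (normalize_intContent _) (normalize_intContent _) ?_
    (intContent_dvd_intContent_map e.toAddMonoidHom v)
  simpa using intContent_dvd_intContent_map e.symm.toAddMonoidHom (e v)

theorem not_bddAbove_range_intContent_mulVec_sub [DecidableEq ι] [Nonempty ι]
    {M : Matrix ι ι ℤ} (hM : M.det ≠ 0) (a : ι → ℤ) :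
    ¬ BddAbove (Set.range fun x => intContent (M *ᵥ x - a)) := by
  obtain ⟨b, hb, m, rfl⟩ : ∃ b ≠ 0, ∃ m : ℤ, a = m • b := by
    by_cases ha : a = 0
    · obtain ⟨i⟩ := ‹Nonempty ι›
      exact ⟨Pi.single i 1, by simp, 0, by simp [ha]⟩
    · exact ⟨a, ha, 1, (one_smul ℤ a).symm⟩
  rintro ⟨B, hB⟩
  set t := M.det * (|m| + |B| + 1)
  have hx : M *ᵥ (M.adjugate *ᵥ (t • b)) - m • b = (M.det * t - m) • b := by
    rw [mulVec_mulVec, mul_adjugate, smul_mulVec, one_mulVec, smul_smul, sub_smul]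
  have hle : intContent (M *ᵥ (M.adjugate *ᵥ (t • b)) - m • b) ≤ B := hB ⟨_, rfl⟩
  rw [hx, intContent_smul] at hle
  have hd : 1 ≤ M.det * M.det := by nlinarith [Int.one_le_abs hM, abs_mul_abs_self M.det]
  have ht : |B| + 1 ≤ |M.det * t - m| :=
    le_abs.2 (Or.inl (by simp only [t]; nlinarith [abs_nonneg m, abs_nonneg B, le_abs_self m]))
  nlinarith [le_abs_self B, mul_le_mul_of_nonneg_left (one_le_intContent hb)
    (abs_nonneg (M.det * t - m))]

end IntContent

theorem zmod_two_eq_zero_or_eq_one : ∀ c : ZMod 2, c = 0 ∨ c = 1 := by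
  decide

namespace Wreath

open Finsupp Matrix

variable {k : ℕ}

theorem lamp_mul_self (s : Multiplicative (Lamp 2 k)) : s * s = 1 := by
  apply toAdd.injective
  ext x
  exact CharTwo.add_self_eq_zero (toAdd s x)

theorem right_apply_eq_one_iff (φ : Wreath 2 k ≃* Wreath 2 k) (g : Wreath 2 k) :
    (φ g).right = 1 ↔ g.right = 1 := by
  simp only [right_eq_one_iff_mul_self_eq_one lamp_mul_self, ← map_mul,
    EmbeddingLike.map_eq_one_iff]

variable (φ : Wreath 2 k ≃* Wreath 2 k)

noncomputable def lampEquiv : Lamp 2 k ≃+ Lamp 2 k :=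
  AddEquiv.toMultiplicative.symm (leftEquiv φ (right_apply_eq_one_iff φ))

noncomputable def baseEquiv : (Fin k → ℤ) ≃+ (Fin k → ℤ) :=
  AddEquiv.toMultiplicative.symm (rightEquiv φ (right_apply_eq_one_iff φ))

noncomputable def baseMatrix : Matrix (Fin k) (Fin k) ℤ :=
  LinearMap.toMatrix' (baseEquiv φ).toAddMonoidHom.toIntLinearMap

theorem one_sub_baseMatrix_mulVec (y : Fin k → ℤ) :
    (1 - baseMatrix φ) *ᵥ y = y - baseEquiv φ y := by
  rw [sub_mulVec, one_mulVec, baseMatrix, LinearMap.toMatrix'_mulVec]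
  rfl

theorem toAdd_right_twist (h g : Wreath 2 k) :
    toAdd (h * g * (φ h)⁻¹).right = toAdd g.right + (1 - baseMatrix φ) *ᵥ toAdd h.right := by
  rw [right_twist φ (right_apply_eq_one_iff φ), one_sub_baseMatrix_mulVec, toAdd_mul, toAdd_mul,
    toAdd_inv]
  change _ + _ + -baseEquiv φ (toAdd h.right) = _
  abel

theorem lampEquiv_domCongr (y : Fin k → ℤ) (s : Lamp 2 k) :
    lampEquiv φ (Finsupp.domCongr (Equiv.addRight y) s) =
      Finsupp.domCongr (Equiv.addRight (baseEquiv φ y)) (lampEquiv φ s) :=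
  congrArg toAdd (leftEquiv_aut φ (right_apply_eq_one_iff φ) (ofAdd y) (ofAdd s))

theorem lampEquiv_single_one (x : Fin k → ℤ) :
    lampEquiv φ (single x 1) =
      Finsupp.domCongr (Equiv.addRight (baseEquiv φ x)) (lampEquiv φ (single 0 1)) := by
  simpa using lampEquiv_domCongr φ x (single 0 1)

theorem ofCoeff_lampEquiv (s : Lamp 2 k) :
    AddMonoidAlgebra.ofCoeff (lampEquiv φ s) =
      AddMonoidAlgebra.ofCoeff (lampEquiv φ (single 0 1)) *
        AddMonoidAlgebra.mapDomain (baseEquiv φ) (AddMonoidAlgebra.ofCoeff s) := by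
  induction s using Finsupp.induction_linear with
  | zero => simp
  | add s t hs ht =>
    simp only [map_add, AddMonoidAlgebra.ofCoeff_add, AddMonoidAlgebra.mapDomain_add, mul_add,
      hs, ht]
  | single x c =>
    obtain rfl | rfl := zmod_two_eq_zero_or_eq_one c
    · simp
    · rw [lampEquiv_single_one, AddMonoidAlgebra.ofCoeff_single,
        AddMonoidAlgebra.mapDomain_single]
      ext y
      simp

theorem exists_lampEquiv_single_one :
    ∃ a, ∀ x, lampEquiv φ (single x 1) = single (a + baseEquiv φ x) 1 := by
  obtain ⟨σ, hσ⟩ := (lampEquiv φ).surjective (single 0 1)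
  obtain ⟨a, c, hu⟩ := AddMonoidAlgebra.exists_eq_single_of_mul_eq_single one_ne_zero
    ((ofCoeff_lampEquiv φ σ).symm.trans (congrArg AddMonoidAlgebra.ofCoeff hσ))
  replace hu : lampEquiv φ (single 0 1) = single a c := congrArg AddMonoidAlgebra.coeff hu
  obtain rfl | rfl := zmod_two_eq_zero_or_eq_one c
  · simp at hu
  · exact ⟨a, fun x => by rw [lampEquiv_single_one, hu]; simp⟩

theorem mapDomain_lampEquiv {β : Type*} {a : Fin k → ℤ}
    (ha : ∀ x, lampEquiv φ (single x 1) = single (a + baseEquiv φ x) 1)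
    {q : (Fin k → ℤ) → β} (hq : ∀ x, q (a + baseEquiv φ x) = q x) (s : Lamp 2 k) :
    mapDomain q (lampEquiv φ s) = mapDomain q s := by
  induction s using Finsupp.induction_linear with
  | zero => simp
  | add s t hs ht => rw [map_add, mapDomain_add, mapDomain_add, hs, ht]
  | single x c =>
    obtain rfl | rfl := zmod_two_eq_zero_or_eq_one c
    · simp
    · rw [ha, mapDomain_single, mapDomain_single, hq]

theorem infinite_reidemeisterClasses_of_det_eq_zero (hdet : (1 - baseMatrix φ).det = 0) :
    Infinite (ReidemeisterClasses φ) := by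
  obtain ⟨c, hc, hcM⟩ := exists_vecMul_eq_zero_iff.2 hdet
  refine infinite_reidemeisterClasses_of_invariantOn (S := Set.univ)
    (fun g => c ⬝ᵥ toAdd g.right) (fun g _ h _ => ?_) ?_
  · rw [toAdd_right_twist, dotProduct_add, dotProduct_mulVec, hcM, zero_dotProduct, add_zero]
  · have hcc : c ⬝ᵥ c ≠ 0 := mt dotProduct_self_eq_zero.1 hc
    refine Set.infinite_of_injective_forall_mem (f := fun m : ℤ => m * (c ⬝ᵥ c))
      (mul_left_injective₀ hcc) fun m => ⟨inr (ofAdd (m • c)), Set.mem_univ _, ?_⟩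
    simp only [right_inr, toAdd_ofAdd, dotProduct_smul, smul_eq_mul]

theorem infinite_reidemeisterClasses_of_det_ne_zero [Nonempty (Fin k)]
    (hdet : (1 - baseMatrix φ).det ≠ 0) : Infinite (ReidemeisterClasses φ) := by
  obtain ⟨a, ha⟩ := exists_lampEquiv_single_one φ
  set q : (Fin k → ℤ) → ℤ := fun x => intContent ((1 - baseMatrix φ) *ᵥ x - a)
  have hq : ∀ x, q (a + baseEquiv φ x) = q x := fun x => by
    simp only [q, one_sub_baseMatrix_mulVec]
    rw [← intContent_addEquiv (baseEquiv φ) (x - baseEquiv φ x - a)]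
    congr 1
    simp only [map_sub, map_add]
    abel
  have hfix : ∀ h : Wreath 2 k, (1 - baseMatrix φ) *ᵥ toAdd h.right = 0 → h.right = 1 := by
    intro h hh
    by_contra hne
    exact hdet (exists_mulVec_eq_zero_iff.1 ⟨_, hne, hh⟩)
  refine infinite_reidemeisterClasses_of_invariantOn (S := {g | g.right = 1})
    (fun g => mapDomain q (toAdd g.left)) ?_ ?_
  · rintro g (hg : g.right = 1) h (hhg : _ = 1)
    have hh : h.right = 1 := hfix h (by simpa [hg, hhg] using (toAdd_right_twist φ h g).symm)
    rw [eq_inl_left_of_right_eq_one hh, eq_inl_left_of_right_eq_one hg,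
      inl_twist_inl φ (right_apply_eq_one_iff φ), left_inl, left_inl, toAdd_mul, toAdd_mul,
      toAdd_inv, ← sub_eq_add_neg, mapDomain_sub, mapDomain_add]
    change _ + _ - mapDomain q (lampEquiv φ (toAdd h.left)) = _
    rw [mapDomain_lampEquiv φ ha hq, add_sub_cancel_left]
  · refine ((Set.infinite_of_not_bddAbove (not_bddAbove_range_intContent_mulVec_sub hdet a)).image
      (single_left_injective one_ne_zero).injOn).mono ?_
    rintro _ ⟨_, ⟨x, rfl⟩, rfl⟩
    exact ⟨inl (ofAdd (single x 1)), right_inl _, by simp [q]⟩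

end Wreath

/-- `ℤ_2 wr ℤ^k` has property `R_∞`: every automorphism has infinitely many
Reidemeister classes. -/
theorem stmt9 (k : ℕ) (hk : 1 ≤ k) (φ : Wreath 2 k ≃* Wreath 2 k) :
    Infinite (ReidemeisterClasses φ) := by
  have : Nonempty (Fin k) := ⟨⟨0, hk⟩⟩
  by_cases hdet : (1 - Wreath.baseMatrix φ).det = 0
  · exact Wreath.infinite_reidemeisterClasses_of_det_eq_zero φ hdet
  · exact Wreath.infinite_reidemeisterClasses_of_det_ne_zero φ hdet
end

section
/- Let p be a prime, k ≥ 1, Γ = ℤ_p wr ℤ^k, and let φ be an automorphism of Γ with restriction φ' to Σ. Then there exist x₀ ∈ ℤ^k and a nonzero m ∈ ℤ/pℤ such that φ'(δ_0) = m·δ_{x₀}; consequently φ'(δ_y) = m·δ_{φ̄(y) + x₀} for all y ∈ ℤ^k. -/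
/-!
Since `Σ` is torsion and `ℤ^k` is torsion-free, `φ` maps `Σ` onto itself, and the
restriction `ψ = φ'` intertwines the shift by `y` with the shift by `φ̄(y)`. Identifying `Σ`
with the group algebra `𝔽_p[ℤ^k]`, in which shifting by `y` is multiplication by `δ_y`, this
says `ψ(f) = φ̄_*(f) · ψ(δ_0)`. As `ψ` is onto, `δ_0 = ψ(u) = φ̄_*(u) · ψ(δ_0)` for some `u`,
so `ψ(δ_0)` is a unit of `𝔽_p[ℤ^k]`. Because `ℤ^k` is a group with two unique sums (it is
orderable), the units of this group algebra are the monomials `m·δ_{x₀}`.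
-/

namespace AddMonoidAlgebra

variable {R G : Type*}

open Finset in
theorem exists_eq_single_of_mul_eq_one [Semiring R] [NoZeroDivisors R] [Nontrivial R]
    [AddMonoid G] [TwoUniqueSums G] {f g : AddMonoidAlgebra R G} (h : f * g = 1) :
    ∃ a r, r ≠ 0 ∧ f = single a r := by
  classical
  set A := f.coeff.support
  set B := g.coeff.support
  have add_eq_zero {a b : G} (hu : UniqueAdd A B a b) (ha : a ∈ A) (hb : b ∈ B) : a + b = 0 := by
    by_contra hne
    have hab := coeff_mul_add_of_uniqueAdd hu
    rw [h, one_def, coeff_single, Finsupp.single_eq_of_ne hne] at hab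
    exact mul_ne_zero (Finsupp.mem_support_iff.mp ha) (Finsupp.mem_support_iff.mp hb) hab.symm
  have hcard : #A * #B ≤ 1 := by
    by_contra! hlt
    obtain ⟨p₁, hp₁, p₂, hp₂, hne, hu₁, hu₂⟩ := TwoUniqueSums.uniqueAdd_of_one_lt_card hlt
    rw [mem_product] at hp₁ hp₂
    have hp := hu₁ hp₂.1 hp₂.2
      ((add_eq_zero hu₂ hp₂.1 hp₂.2).trans (add_eq_zero hu₁ hp₁.1 hp₁.2).symm)
    exact hne (Prod.ext hp.1.symm hp.2.symm)
  have hA : 0 < #A := card_pos.mpr <| Finsupp.support_nonempty_iff.mpr <|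
    coeff_eq_zero.not.mpr (left_ne_zero_of_mul_eq_one h)
  have hB : 0 < #B := card_pos.mpr <| Finsupp.support_nonempty_iff.mpr <|
    coeff_eq_zero.not.mpr (right_ne_zero_of_mul_eq_one h)
  obtain ⟨a, ha⟩ := card_eq_one.mp (show #A = 1 by nlinarith)
  obtain ⟨hfa, hf⟩ := Finsupp.support_eq_singleton.mp ha
  exact ⟨a, f.coeff a, hfa, coeff_injective hf⟩

theorem eq_mapDomain_mul_of_map_single_one_mul [Semiring R] [AddMonoid G] (β : G → G)
    (ψ : AddMonoidAlgebra R G →ₗ[R] AddMonoidAlgebra R G)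
    (hψ : ∀ y f, ψ (single y 1 * f) = single (β y) 1 * ψ f) (f : AddMonoidAlgebra R G) :
    ψ f = mapDomain β f * ψ 1 := by
  induction f using induction_linear with
  | zero => simp
  | add f g hf hg => rw [map_add, mapDomain_add, hf, hg, add_mul]
  | single y r =>
    have hsingle (x : G) : single x r = r • (single x 1 * 1) := by simp [smul_single]
    rw [mapDomain_single, hsingle, hsingle, map_smul, hψ, smul_mul_assoc, mul_one]

theorem exists_map_one_eq_single [CommSemiring R] [NoZeroDivisors R] [Nontrivial R]
    [AddCommMonoid G] [TwoUniqueSums G] (β : G → G)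
    (ψ : AddMonoidAlgebra R G →ₗ[R] AddMonoidAlgebra R G)
    (hψ : ∀ y f, ψ (single y 1 * f) = single (β y) 1 * ψ f) (hsurj : Function.Surjective ψ) :
    ∃ a r, r ≠ 0 ∧ ψ 1 = single a r := by
  obtain ⟨u, hu⟩ := hsurj 1
  refine exists_eq_single_of_mul_eq_one (g := mapDomain β u) ?_
  rw [mul_comm, ← eq_mapDomain_mul_of_map_single_one_mul β ψ hψ, hu]

end AddMonoidAlgebra

namespace SemidirectProduct

section Group

variable {N H F : Type*} [Group N] [Group H] {α : H →* MulAut N}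
  [FunLike F (N ⋊[α] H) (N ⋊[α] H)] [MonoidHomClass F (N ⋊[α] H) (N ⋊[α] H)]

def restrictLeft (φ : F) (hφ : ∀ n, (φ (inl n)).right = 1) : N →* N where
  toFun n := (φ (inl n)).left
  map_one' := by simp
  map_mul' m n := by simp [mul_left, hφ]

theorem inl_restrictLeft (φ : F) (hφ : ∀ n, (φ (inl n)).right = 1) (n : N) :
    inl (restrictLeft φ hφ n) = φ (inl n) := by
  ext
  · rfl
  · exact (hφ n).symm

theorem restrictLeft_surjective (φ : N ⋊[α] H ≃* N ⋊[α] H)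
    (hφ : ∀ n, (φ (inl n)).right = 1) (hφ' : ∀ n, (φ.symm (inl n)).right = 1) :
    Function.Surjective (restrictLeft φ hφ) := fun n =>
  ⟨restrictLeft φ.symm hφ' n, inl_injective <| by
    rw [inl_restrictLeft, inl_restrictLeft, MulEquiv.apply_symm_apply]⟩

end Group

section CommGroup

variable {N H F : Type*} [CommGroup N] [Group H] {α : H →* MulAut N}
  [FunLike F (N ⋊[α] H) (N ⋊[α] H)] [MonoidHomClass F (N ⋊[α] H) (N ⋊[α] H)]

theorem mul_inl_mul_inv (g : N ⋊[α] H) (n : N) : g * inl n * g⁻¹ = inl (α g.right n) := by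
  ext
  · simp [mul_left, inv_left]
  · simp [mul_right, inv_right]

theorem restrictLeft_aut (φ : F) (hφ : ∀ n, (φ (inl n)).right = 1) (h : H) (n : N) :
    restrictLeft φ hφ (α h n) = α (φ (inr h)).right (restrictLeft φ hφ n) := by
  apply inl_injective (φ := α)
  rw [inl_restrictLeft, inl_aut, map_mul, map_mul, map_inv, map_inv, ← inl_restrictLeft φ hφ,
    mul_inl_mul_inv]

end CommGroup

end SemidirectProduct

namespace Wreath

open SemidirectProduct Multiplicative AddMonoidAlgebra

variable {q k : ℕ} {F : Type*} [FunLike F (Wreath q k) (Wreath q k)]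
  [MonoidHomClass F (Wreath q k) (Wreath q k)]

theorem right_map_inl [NeZero q] (φ : F) (f : Multiplicative (Lamp q k)) :
    (φ (inl f)).right = 1 := by
  have hf : f ^ q = 1 := toAdd.injective <| by ext x; simp [nsmul_eq_mul]
  show rightHom (φ (inl f)) = 1
  rw [← pow_eq_one_iff_left (NeZero.ne q), ← map_pow, ← map_pow, ← map_pow, hf]
  simp

/-- `φ'`, transported from `Σ = Lamp q k` to the group algebra `(ZMod q)[ℤ^k]` with the same
coefficients, where the shift action becomes multiplication by `single y 1`. -/
noncomputable def lampEnd [NeZero q] (φ : F) :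
    AddMonoidAlgebra (ZMod q) (Fin k → ℤ) →ₗ[ZMod q] AddMonoidAlgebra (ZMod q) (Fin k → ℤ) :=
  AddMonoidHom.toZModLinearMap q <|
    coeffAddEquiv.symm.toAddMonoidHom.comp <|
      (AddMonoidHom.toMultiplicative.symm (restrictLeft φ (right_map_inl φ))).comp
        coeffAddEquiv.toAddMonoidHom

theorem map_inl_ofAdd [NeZero q] (φ : F) (f : Lamp q k) :
    φ (inl (ofAdd f)) = inl (ofAdd (lampEnd φ (ofCoeff f)).coeff) :=
  (inl_restrictLeft φ (right_map_inl φ) _).symm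

theorem lampShift_ofAdd (y : Fin k → ℤ) (f : Lamp q k) :
    lampShift q k (ofAdd y) (ofAdd f) = ofAdd (single y 1 * ofCoeff f).coeff := by
  apply toAdd.injective
  ext x
  simp [lampShift, add_comm]

theorem lampEnd_single_one_mul [NeZero q] (φ : F) (y : Fin k → ℤ)
    (f : AddMonoidAlgebra (ZMod q) (Fin k → ℤ)) :
    lampEnd φ (single y 1 * f) = single (toAdd (φ (inr (ofAdd y))).right) 1 * lampEnd φ f := by
  have h := restrictLeft_aut φ (right_map_inl φ) (ofAdd y) (ofAdd f.coeff)
  rw [lampShift_ofAdd, ← ofAdd_toAdd (φ (inr (ofAdd y))).right,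
    ← ofAdd_toAdd (restrictLeft φ _ (ofAdd f.coeff)), lampShift_ofAdd] at h
  exact congrArg (ofCoeff ∘ toAdd) h

theorem lampEnd_surjective [NeZero q] (φ : Wreath q k ≃* Wreath q k) :
    Function.Surjective (lampEnd φ) := fun f => by
  obtain ⟨g, hg⟩ :=
    restrictLeft_surjective φ (right_map_inl φ) (right_map_inl φ.symm) (ofAdd f.coeff)
  exact ⟨ofCoeff (toAdd g), congrArg (ofCoeff ∘ toAdd) hg⟩

end Wreath

open SemidirectProduct Multiplicative AddMonoidAlgebra Wreath in
theorem stmt11_general (p : ℕ) (hp : p.Prime) (k : ℕ)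
    (φ : Wreath p k ≃* Wreath p k) :
    ∃ (x₀ : Fin k → ℤ) (m : ZMod p), m ≠ 0 ∧
      φ (SemidirectProduct.inl (lampDelta p k 0))
        = SemidirectProduct.inl (Multiplicative.ofAdd (Finsupp.single x₀ m)) ∧
      ∀ B : (Fin k → ℤ) ≃+ (Fin k → ℤ),
        (∀ γ : Wreath p k, Multiplicative.toAdd (SemidirectProduct.rightHom (φ γ))
            = B (Multiplicative.toAdd (SemidirectProduct.rightHom γ))) →
        ∀ y : Fin k → ℤ, φ (SemidirectProduct.inl (lampDelta p k y))
          = SemidirectProduct.inl (Multiplicative.ofAdd (Finsupp.single (B y + x₀) m)) := by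
  have : Fact p.Prime := ⟨hp⟩
  obtain ⟨x₀, m, hm, hone⟩ := exists_map_one_eq_single _ (lampEnd φ)
    (lampEnd_single_one_mul φ) (lampEnd_surjective φ)
  have hδ (y : Fin k → ℤ) : φ (inl (lampDelta p k y))
      = inl (ofAdd (Finsupp.single (toAdd (φ (inr (ofAdd y))).right + x₀) m)) := by
    rw [lampDelta, map_inl_ofAdd, ← coeff_single, ← mul_one (single y 1), lampEnd_single_one_mul,
      hone, single_mul_single, one_mul]
    rfl
  refine ⟨x₀, m, hm, by simpa using hδ 0, fun B hB y => ?_⟩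
  have hBy : toAdd (φ (inr (ofAdd y))).right = B y := hB (inr (ofAdd y))
  rw [hδ, hBy]

/-- For a prime `p` and any automorphism `φ` of `ℤ_p wr ℤ^k`, there are `x₀ ∈ ℤ^k` and
`m ≠ 0` in `ℤ/pℤ` with `φ'(δ_0) = m·δ_{x₀}`; consequently `φ'(δ_y) = m·δ_{φ̄(y) + x₀}`
for the induced automorphism `φ̄` of `ℤ^k`. -/
theorem stmt11 (p : ℕ) (hp : p.Prime) (k : ℕ) (hk : 1 ≤ k)
    (φ : Wreath p k ≃* Wreath p k) :
    ∃ (x₀ : Fin k → ℤ) (m : ZMod p), m ≠ 0 ∧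
      φ (SemidirectProduct.inl (lampDelta p k 0))
        = SemidirectProduct.inl (Multiplicative.ofAdd (Finsupp.single x₀ m)) ∧
      ∀ B : (Fin k → ℤ) ≃+ (Fin k → ℤ),
        (∀ γ : Wreath p k, Multiplicative.toAdd (SemidirectProduct.rightHom (φ γ))
            = B (Multiplicative.toAdd (SemidirectProduct.rightHom γ))) →
        ∀ y : Fin k → ℤ, φ (SemidirectProduct.inl (lampDelta p k y))
          = SemidirectProduct.inl (Multiplicative.ofAdd (Finsupp.single (B y + x₀) m)) :=
  stmt11_general p hp k φ
end
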